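/- Let X be a set with a bounded structure ℬ and let 𝒞 be a collection of bounded functions X → ℂ. If 𝒰 and 𝒱 are uniformly (𝒞,ℬ)-bounded families of subsets of X, then st(𝒰,𝒱) is uniformly (𝒞,ℬ)-bounded. Hence the uniformly (𝒞,ℬ)-bounded families form a large scale structure LS(𝒞,ℬ) on X. -/
import Mathlib


/-- The star `st(A,𝒰)` of a set `A` with respect to a family `𝒰`. -/
def st {X : Type*} (A : Set X) (𝒰 : Set (Set X)) : Set X :=
  A ∪ ⋃ U ∈ {U ∈ 𝒰 | (U ∩ A).Nonempty}, U

/-- The family `st(𝒰,𝒱) = {st(U,𝒱) : U ∈ 𝒰}`. -/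
def stFam {X : Type*} (𝒰 𝒱 : Set (Set X)) : Set (Set X) :=
  (fun U => st U 𝒱) '' 𝒰

/-- `𝒰` refines `𝒱`: every member of `𝒰` is contained in some member of `𝒱`. -/
def Refines {X : Type*} (𝒰 𝒱 : Set (Set X)) : Prop :=
  ∀ U ∈ 𝒰, ∃ V ∈ 𝒱, U ⊆ V

/-- A large scale structure on `X`: a collection of families of subsets
(the uniformly bounded families) containing the family of singletons,
closed under refinement and under stars. -/
structure LargeScaleStructure (X : Type*) where
  fams : Set (Set (Set X))
  singletons_mem : (Set.range fun x : X => ({x} : Set X)) ∈ fams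
  refines_mem : ∀ 𝒰 ∈ fams, ∀ 𝒱 : Set (Set X), Refines 𝒱 𝒰 → 𝒱 ∈ fams
  star_mem : ∀ 𝒰 ∈ fams, ∀ 𝒱 ∈ fams, stFam 𝒰 𝒱 ∈ fams

/-- A set is bounded if it is a singleton or is contained in a member of some
uniformly bounded family. -/
def LSBounded {X : Type*} (ℒ : LargeScaleStructure X) (B : Set X) : Prop :=
  (∃ x : X, B = {x}) ∨ ∃ 𝒰 ∈ ℒ.fams, ∃ U ∈ 𝒰, B ⊆ U

/-- A set is weakly bounded if its intersection with every component of the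
induced bounded structure is bounded. -/
def LSWeaklyBounded {X : Type*} (ℒ : LargeScaleStructure X) (B : Set X) : Prop :=
  ∀ x : X, LSBounded ℒ (B ∩ {y | LSBounded ℒ ({x, y} : Set X)})

/-- A bounded structure on a set `X`. -/
structure BoundedStructure (X : Type*) where
  sets : Set (Set X)
  singleton_mem : ∀ x : X, ({x} : Set X) ∈ sets
  subset_mem : ∀ A ∈ sets, ∀ B : Set X, B ⊆ A → B ∈ sets
  union_mem : ∀ A ∈ sets, ∀ B ∈ sets, (A ∩ B).Nonempty → A ∪ B ∈ sets

/-- `B` is weakly bounded: its intersection with every `ℬ`-component is bounded. -/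
def BoundedStructure.WeaklyBounded {X : Type*} (ℬ : BoundedStructure X)
    (B : Set X) : Prop :=
  ∀ x : X, B ∩ {y | ({x, y} : Set X) ∈ ℬ.sets} ∈ ℬ.sets

/-- A family `𝒰` is uniformly `(𝒞,ℬ)`-bounded, where the predicate `WB`
singles out the weakly bounded sets: (1) stars of weakly bounded sets are
weakly bounded; (2) for every weakly bounded `B`, every `f ∈ 𝒞` and `ε > 0`
there is a weakly bounded `B' ⊇ B` with `diam f(U ∖ B') ≤ ε` for all `U ∈ 𝒰`. -/
def UnifCB {X : Type*} (WB : Set X → Prop) (𝒞 : Set (X → ℂ))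
    (𝒰 : Set (Set X)) : Prop :=
  (∀ B : Set X, WB B → WB (st B 𝒰)) ∧
  ∀ B : Set X, WB B → ∀ f ∈ 𝒞, ∀ ε : ℝ, 0 < ε →
    ∃ B' : Set X, WB B' ∧ B ⊆ B' ∧
      ∀ U ∈ 𝒰, ∀ x ∈ U \ B', ∀ y ∈ U \ B', dist (f x) (f y) ≤ ε

section Helpers

variable {X : Type*}

lemma subset_st (A : Set X) (𝒰 : Set (Set X)) : A ⊆ st A 𝒰 :=
  Set.subset_union_left

lemma st_subset {A C : Set X} {𝒰 : Set (Set X)} (hAC : A ⊆ C)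
    (h : ∀ U ∈ 𝒰, (U ∩ A).Nonempty → U ⊆ C) : st A 𝒰 ⊆ C := by
  intro x hx
  rcases hx with hx | hx
  · exact hAC hx
  · simp only [Set.mem_iUnion] at hx
    obtain ⟨U, ⟨hU, hne⟩, hxU⟩ := hx
    exact h U hU hne hxU

lemma subset_st_of_mem {A U : Set X} {𝒰 : Set (Set X)} (hU : U ∈ 𝒰)
    (hne : (U ∩ A).Nonempty) : U ⊆ st A 𝒰 := by
  intro x hx
  right
  simp only [Set.mem_iUnion]
  exact ⟨U, ⟨hU, hne⟩, hx⟩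

lemma mem_st_elim {A : Set X} {𝒰 : Set (Set X)} {x : X} (hx : x ∈ st A 𝒰) :
    x ∈ A ∨ ∃ U ∈ 𝒰, (U ∩ A).Nonempty ∧ x ∈ U := by
  rcases hx with hx | hx
  · exact Or.inl hx
  · simp only [Set.mem_iUnion] at hx
    obtain ⟨U, ⟨hU, hne⟩, hxU⟩ := hx
    exact Or.inr ⟨U, hU, hne, hxU⟩

lemma wb_mono (ℬ : BoundedStructure X) {B B' : Set X}
    (h : ℬ.WeaklyBounded B') (hs : B ⊆ B') : ℬ.WeaklyBounded B := fun x =>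
  ℬ.subset_mem _ (h x) _ (Set.inter_subset_inter_left _ hs)

/-- Closure of uniformly bounded families under stars. -/
lemma star_unifCB (ℬ : BoundedStructure X) (𝒞 : Set (X → ℂ))
    (𝒰 𝒱 : Set (Set X)) (h𝒰 : UnifCB ℬ.WeaklyBounded 𝒞 𝒰)
    (h𝒱 : UnifCB ℬ.WeaklyBounded 𝒞 𝒱) :
    UnifCB ℬ.WeaklyBounded 𝒞 (stFam 𝒰 𝒱) := by
  constructor
  · -- condition (1)
    intro B hB
    have hC : ℬ.WeaklyBounded (st (st (st B 𝒱) 𝒰) 𝒱) :=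
      h𝒱.1 _ (h𝒰.1 _ (h𝒱.1 _ hB))
    refine wb_mono ℬ hC ?_
    have hBC : B ⊆ st (st (st B 𝒱) 𝒰) 𝒱 :=
      (subset_st B 𝒱).trans ((subset_st _ 𝒰).trans (subset_st _ 𝒱))
    refine st_subset hBC ?_
    rintro W ⟨U, hU, rfl⟩ ⟨z, hzW, hzB⟩
    -- first: U ⊆ st (st B 𝒱) 𝒰
    have hUC : U ⊆ st (st B 𝒱) 𝒰 := by
      rcases mem_st_elim hzW with hzU | ⟨V, hV, hVU, hzV⟩
      · exact subset_st_of_mem hU ⟨z, hzU, subset_st B 𝒱 hzB⟩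
      · have hVB : V ⊆ st B 𝒱 := subset_st_of_mem hV ⟨z, hzV, hzB⟩
        obtain ⟨w, hwV, hwU⟩ := hVU
        exact subset_st_of_mem hU ⟨w, hwU, hVB hwV⟩
    refine st_subset (hUC.trans (subset_st _ 𝒱)) ?_
    intro V hV ⟨w, hwV, hwU⟩
    exact subset_st_of_mem hV ⟨w, hwV, hUC hwU⟩
  · -- condition (2)
    intro B hB f hf ε hε
    obtain ⟨B₁, hB₁wb, hBB₁, hB₁⟩ := h𝒱.2 B hB f hf (ε / 4) (by positivity)
    obtain ⟨B₂, hB₂wb, hB₂sup, hB₂⟩ :=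
      h𝒰.2 (st B₁ 𝒱) (h𝒱.1 _ hB₁wb) f hf (ε / 4) (by positivity)
    refine ⟨st (st B₂ 𝒰) 𝒱, h𝒱.1 _ (h𝒰.1 _ hB₂wb), ?_, ?_⟩
    · exact hBB₁.trans ((subset_st B₁ 𝒱).trans (hB₂sup.trans
        ((subset_st B₂ 𝒰).trans (subset_st _ 𝒱))))
    · rintro W ⟨U, hU, rfl⟩ x ⟨hxW, hxB'⟩ y ⟨hyW, hyB'⟩
      set B' := st (st B₂ 𝒰) 𝒱 with hB'def
      -- U misses B₂
      have hUB₂ : ∀ u ∈ U, u ∉ B₂ := by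
        intro u huU huB₂
        have hUB₃ : U ⊆ st B₂ 𝒰 := subset_st_of_mem hU ⟨u, huU, huB₂⟩
        rcases mem_st_elim hxW with hxU | ⟨V, hV, hVU, hxV⟩
        · exact hxB' (subset_st _ 𝒱 (hUB₃ hxU))
        · obtain ⟨w, hwV, hwU⟩ := hVU
          exact hxB' (subset_st_of_mem hV ⟨w, hwV, hUB₃ hwU⟩ hxV)
      -- each point of (st U 𝒱) \ B' is ε/4-close (under f) to a point of U
      have key : ∀ z ∈ st U 𝒱, z ∉ B' → ∃ u ∈ U, dist (f z) (f u) ≤ ε / 4 := by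
        intro z hzW hzB'
        rcases mem_st_elim hzW with hzU | ⟨V, hV, hVU, hzV⟩
        · exact ⟨z, hzU, by simp; positivity⟩
        · obtain ⟨w, hwV, hwU⟩ := hVU
          have hVB₁ : ∀ v ∈ V, v ∉ B₁ := by
            intro v hvV hvB₁
            have : V ⊆ st B₁ 𝒱 := subset_st_of_mem hV ⟨v, hvV, hvB₁⟩
            exact hzB' ((subset_st B₂ 𝒰).trans (subset_st _ 𝒱)
              (hB₂sup (this hzV)))
          exact ⟨w, hwU, hB₁ V hV z ⟨hzV, hVB₁ z hzV⟩ w ⟨hwV, hVB₁ w hwV⟩⟩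
      obtain ⟨ux, huxU, hux⟩ := key x hxW hxB'
      obtain ⟨uy, huyU, huy⟩ := key y hyW hyB'
      have hmid : dist (f ux) (f uy) ≤ ε / 4 :=
        hB₂ U hU ux ⟨huxU, hUB₂ ux huxU⟩ uy ⟨huyU, hUB₂ uy huyU⟩
      calc dist (f x) (f y) ≤ dist (f x) (f ux) + dist (f ux) (f uy)
            + dist (f uy) (f y) := dist_triangle4 _ _ _ _
        _ ≤ ε / 4 + ε / 4 + ε / 4 := by
            gcongr
            rw [dist_comm]; exact huy
        _ ≤ ε := by linarith

end Helpers

/-- for a collection `𝒞` of bounded complex functions, the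
uniformly `(𝒞,ℬ)`-bounded families are closed under stars, and they form a
large scale structure `LS(𝒞,ℬ)` on `X`. -/
theorem stmt_6 {X : Type*} (ℬ : BoundedStructure X) (𝒞 : Set (X → ℂ))
    (h𝒞 : ∀ f ∈ 𝒞, ∃ M : ℝ, ∀ x, ‖f x‖ ≤ M) :
    (∀ 𝒰 𝒱 : Set (Set X), UnifCB ℬ.WeaklyBounded 𝒞 𝒰 →
      UnifCB ℬ.WeaklyBounded 𝒞 𝒱 → UnifCB ℬ.WeaklyBounded 𝒞 (stFam 𝒰 𝒱)) ∧
    ∃ ℒ : LargeScaleStructure X, ℒ.fams = {𝒰 | UnifCB ℬ.WeaklyBounded 𝒞 𝒰} := by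
  refine ⟨star_unifCB ℬ 𝒞, ⟨⟨{𝒰 | UnifCB ℬ.WeaklyBounded 𝒞 𝒰}, ?_, ?_, ?_⟩, rfl⟩⟩
  · -- singletons
    constructor
    · intro B hB
      refine wb_mono ℬ hB (st_subset subset_rfl ?_)
      rintro U ⟨a, rfl⟩ ⟨w, hwU, hwB⟩
      intro z hz
      rcases hwU with rfl
      rcases hz with rfl
      exact hwB
    · intro B hB f hf ε hε
      refine ⟨B, hB, subset_rfl, ?_⟩
      rintro U ⟨a, rfl⟩ x ⟨hxU, _⟩ y ⟨hyU, _⟩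
      rcases hxU with rfl
      rcases hyU with rfl
      simpa using le_of_lt hε
  · -- refinement
    intro 𝒰 h𝒰 𝒱 href
    constructor
    · intro B hB
      refine wb_mono ℬ (h𝒰.1 B hB) (st_subset (subset_st B 𝒰) ?_)
      intro V hV ⟨w, hwV, hwB⟩
      obtain ⟨U, hU, hVU⟩ := href V hV
      exact hVU.trans (subset_st_of_mem hU ⟨w, hVU hwV, hwB⟩)
    · intro B hB f hf ε hε
      obtain ⟨B', hB'wb, hBB', hB'⟩ := h𝒰.2 B hB f hf ε hε
      refine ⟨B', hB'wb, hBB', ?_⟩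
      intro V hV x hx y hy
      obtain ⟨U, hU, hVU⟩ := href V hV
      exact hB' U hU x ⟨hVU hx.1, hx.2⟩ y ⟨hVU hy.1, hy.2⟩
  · -- stars
    intro 𝒰 h𝒰 𝒱 h𝒱
    exact star_unifCB ℬ 𝒞 𝒰 𝒱 h𝒰 h𝒱
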